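/- arXiv:2404.19227 — 2 statements merged into one kernel-verified Lean document; each statement's English description precedes it below -/
import Mathlib

section
/- Let E be a real inner product space, and let c ∈ E be nonzero. For every nonzero x ∈ E, the norm of the gradient at x of the cosine-similarity map y ↦ ⟪y, c⟫ / (‖y‖ · ‖c‖) is at most 1 / ‖x‖. -/
/-!
Writing the cosine similarity as `‖c‖⁻¹ * (⟪y, c⟫ / ‖y‖)`, the quotient rule gives the gradient
`‖x‖⁻¹ • (c - (⟪x, c⟫ / ‖x‖ ^ 2) • x)` of `y ↦ ⟪y, c⟫ / ‖y‖` at `x ≠ 0`, i.e. `‖x‖⁻¹` times the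
orthogonal projection of `c` onto `xᗮ`. Orthogonal projections do not increase norms, so the
gradient of the cosine similarity has norm at most `‖c‖⁻¹ * ‖x‖⁻¹ * ‖c‖ ≤ 1 / ‖x‖`.
-/

open InnerProductSpace

section

variable {E : Type*} [NormedAddCommGroup E] [InnerProductSpace ℝ E]

theorem hasFDerivAt_norm_of_ne_zero {x : E} (hx : x ≠ 0) :
    HasFDerivAt (‖·‖) (‖x‖⁻¹ • innerSL ℝ x) x := by
  have h := (hasStrictFDerivAt_norm_sq x).hasFDerivAt.sqrt (by positivity)
  simp only [Real.sqrt_sq (norm_nonneg _)] at h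
  refine h.congr_fderiv ?_
  ext v
  simp
  field_simp

theorem hasFDerivAt_inner_div_norm (c : E) {x : E} (hx : x ≠ 0) :
    HasFDerivAt (fun y => ⟪y, c⟫_ℝ / ‖y‖)
      (‖x‖⁻¹ • (innerSL ℝ c - (⟪x, c⟫_ℝ / ‖x‖ ^ 2) • innerSL ℝ x)) x := by
  have hnum : HasFDerivAt (fun y => ⟪y, c⟫_ℝ) (innerSL ℝ c) x := by
    convert (innerSL ℝ c).hasFDerivAt using 1
    ext y
    exact real_inner_comm c y
  have hinv := (hasDerivAt_inv (norm_ne_zero_iff.mpr hx)).comp_hasFDerivAt x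
    (hasFDerivAt_norm_of_ne_zero hx)
  refine (hnum.mul hinv).congr_fderiv ?_
  ext v
  simp
  field_simp
  ring

variable [CompleteSpace E]

theorem HasGradientAt.const_mul {f : E → ℝ} {f' x : E} (hf : HasGradientAt f f' x) (a : ℝ) :
    HasGradientAt (fun y => a * f y) (a • f') x := by
  rw [hasGradientAt_iff_hasFDerivAt] at *
  simpa using hf.const_mul a

theorem hasGradientAt_inner_div_norm (c : E) {x : E} (hx : x ≠ 0) :
    HasGradientAt (fun y => ⟪y, c⟫_ℝ / ‖y‖) (‖x‖⁻¹ • (ℝ ∙ x)ᗮ.starProjection c) x := by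
  refine (hasFDerivAt_inner_div_norm c hx).congr_fderiv ?_
  ext v
  simp [Submodule.starProjection_orthogonal_val, Submodule.starProjection_singleton,
    real_inner_comm]

end

theorem cosine_similarity_gradient_norm_le_general
    {E : Type*} [NormedAddCommGroup E] [InnerProductSpace ℝ E] [CompleteSpace E]
    (c : E) (x : E) (hx : x ≠ 0) :
    ‖gradient (fun y => (inner ℝ y c : ℝ) / (‖y‖ * ‖c‖)) x‖ ≤ 1 / ‖x‖ := by
  have hgrad : HasGradientAt (fun y => ⟪y, c⟫_ℝ / (‖y‖ * ‖c‖))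
      (‖c‖⁻¹ • ‖x‖⁻¹ • (ℝ ∙ x)ᗮ.starProjection c) x := by
    convert (hasGradientAt_inner_div_norm c hx).const_mul ‖c‖⁻¹ using 2 with y
    ring
  rw [hgrad.gradient, norm_smul, norm_smul, norm_inv, norm_inv, norm_norm, norm_norm]
  calc ‖c‖⁻¹ * (‖x‖⁻¹ * ‖(ℝ ∙ x)ᗮ.starProjection c‖)
      ≤ ‖c‖⁻¹ * (‖x‖⁻¹ * ‖c‖) := by gcongr; exact Submodule.norm_starProjection_apply_le _ c
    _ = ‖c‖⁻¹ * ‖c‖ * (1 / ‖x‖) := by ring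
    _ ≤ 1 / ‖x‖ := mul_le_of_le_one_left (by positivity) inv_mul_le_one

theorem cosine_similarity_gradient_norm_le
    {E : Type*} [NormedAddCommGroup E] [InnerProductSpace ℝ E] [CompleteSpace E]
    (c : E) (hc : c ≠ 0) (x : E) (hx : x ≠ 0) :
    ‖gradient (fun y => (inner ℝ y c : ℝ) / (‖y‖ * ‖c‖)) x‖ ≤ 1 / ‖x‖ :=
  cosine_similarity_gradient_norm_le_general c x hx
end

section
/- Let E be a real inner product space, τ > 0, and c^u, c^a ∈ E nonzero, and let g(x) := exp(τ·cos(x,c^u)) / (exp(τ·cos(x,c^u)) + exp(τ·cos(x,c^a))) where cos(x,c) := ⟪x, c⟫ / (‖x‖ · ‖c‖). Then for every nonzero x ∈ E and every δ ∈ E with ‖δ‖ < ‖x‖, one has |g(x + δ) − g(x)| ≤ (τ/2) · ‖δ‖ / (‖x‖ − ‖δ‖). -/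
/-!
The confidence function is a logistic sigmoid, `g x = σ (τ (cos(x, cᵘ) - cos(x, cᵃ)))`, and `σ` is
`1/4`-Lipschitz since `σ' = σ (1 - σ) ≤ 1/4`. Each cosine similarity moves by at most the distance
between the normalized vectors, and the identity
`‖x - y‖² = (‖x‖ - ‖y‖)² + ‖x‖ ‖y‖ ‖x/‖x‖ - y/‖y‖‖²` with `‖x‖ ‖x + δ‖ ≥ (‖x‖ - ‖δ‖)²` bounds that
distance by `‖δ‖ / (‖x‖ - ‖δ‖)`.
-/

/-- Cosine similarity of two vectors in a real inner product space. -/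
noncomputable def cosSim {E : Type*} [NormedAddCommGroup E] [InnerProductSpace ℝ E]
    (x c : E) : ℝ :=
  (inner ℝ x c : ℝ) / (‖x‖ * ‖c‖)

/-- The Espresso confidence function
`g(x) = exp(τ·cos(x,cᵘ)) / (exp(τ·cos(x,cᵘ)) + exp(τ·cos(x,cᵃ)))`. -/
noncomputable def espressoG {E : Type*} [NormedAddCommGroup E] [InnerProductSpace ℝ E]
    (τ : ℝ) (cu ca : E) (x : E) : ℝ :=
  Real.exp (τ * cosSim x cu) /
    (Real.exp (τ * cosSim x cu) + Real.exp (τ * cosSim x ca))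

open Real NormedSpace
open scoped InnerProductSpace

namespace Real

lemma sigmoid_mul_one_sub_le (x : ℝ) : sigmoid x * (1 - sigmoid x) ≤ 4⁻¹ := by
  nlinarith [sq_nonneg (sigmoid x - 2⁻¹)]

lemma lipschitzWith_sigmoid : LipschitzWith 4⁻¹ sigmoid :=
  lipschitzWith_of_nnnorm_deriv_le differentiable_sigmoid fun x => by
    have hderiv_nonneg : 0 ≤ sigmoid x * (1 - sigmoid x) :=
      mul_nonneg (sigmoid_nonneg x) (sub_nonneg.mpr (sigmoid_le_one x))
    rw [deriv_sigmoid, ← NNReal.coe_le_coe, coe_nnnorm, norm_of_nonneg hderiv_nonneg]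
    simpa using sigmoid_mul_one_sub_le x

lemma exp_div_exp_add_exp (a b : ℝ) : exp a / (exp a + exp b) = sigmoid (a - b) := by
  rw [sigmoid_def, neg_sub, exp_sub]
  field_simp

end Real

namespace NormedSpace

lemma norm_normalize_le {V : Type*} [NormedAddCommGroup V] [NormedSpace ℝ V] (x : V) :
    ‖normalize x‖ ≤ 1 := by
  rcases eq_or_ne x 0 with rfl | hx
  · simp
  · exact (norm_normalize hx).le

variable {E : Type*} [NormedAddCommGroup E] [InnerProductSpace ℝ E]

lemma norm_sub_sq_eq_norm_sub_norm_sq_add_normalize {x y : E} (hx : x ≠ 0) (hy : y ≠ 0) :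
    ‖x - y‖ ^ 2 = (‖x‖ - ‖y‖) ^ 2 + ‖x‖ * ‖y‖ * ‖normalize x - normalize y‖ ^ 2 := by
  have hx' : ‖x‖ ≠ 0 := norm_ne_zero_iff.mpr hx
  have hy' : ‖y‖ ≠ 0 := norm_ne_zero_iff.mpr hy
  rw [norm_sub_sq_real, norm_sub_sq_real, norm_normalize hx, norm_normalize hy, normalize,
    normalize, real_inner_smul_left, real_inner_smul_right]
  field_simp
  ring

lemma norm_normalize_add_sub_normalize_le {x δ : E} (h : ‖δ‖ < ‖x‖) :
    ‖normalize (x + δ) - normalize x‖ ≤ ‖δ‖ / (‖x‖ - ‖δ‖) := by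
  have hgap : 0 < ‖x‖ - ‖δ‖ := sub_pos.mpr h
  have hgap_le : ‖x‖ - ‖δ‖ ≤ ‖x + δ‖ := by
    have := norm_sub_norm_le x (-δ)
    rw [norm_neg, sub_neg_eq_add] at this
    linarith
  have hx : x ≠ 0 := norm_pos_iff.mp ((norm_nonneg δ).trans_lt h)
  have hxδ : x + δ ≠ 0 := norm_pos_iff.mp (hgap.trans_le hgap_le)
  have hsq := norm_sub_sq_eq_norm_sub_norm_sq_add_normalize hxδ hx
  rw [add_sub_cancel_left] at hsq
  have hprod : (‖x‖ - ‖δ‖) ^ 2 ≤ ‖x + δ‖ * ‖x‖ := by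
    rw [sq]
    exact mul_le_mul hgap_le (sub_le_self _ (norm_nonneg δ)) hgap.le (norm_nonneg _)
  have hsq_le : (‖normalize (x + δ) - normalize x‖ * (‖x‖ - ‖δ‖)) ^ 2 ≤ ‖δ‖ ^ 2 := by
    rw [mul_pow, mul_comm]
    nlinarith [sq_nonneg (‖x + δ‖ - ‖x‖), sq_nonneg ‖normalize (x + δ) - normalize x‖]
  rw [le_div_iff₀ hgap]
  exact (pow_le_pow_iff_left₀ (by positivity) (norm_nonneg δ) two_ne_zero).mp hsq_le

end NormedSpace

section Espresso

variable {E : Type*} [NormedAddCommGroup E] [InnerProductSpace ℝ E]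

lemma cosSim_eq_inner_normalize (x c : E) : cosSim x c = ⟪normalize x, normalize c⟫_ℝ := by
  rw [cosSim, NormedSpace.normalize, NormedSpace.normalize, real_inner_smul_left,
    real_inner_smul_right, div_eq_mul_inv, mul_inv]
  ring

lemma abs_cosSim_sub_cosSim_le (x y c : E) :
    |cosSim x c - cosSim y c| ≤ ‖normalize x - normalize y‖ := by
  rw [cosSim_eq_inner_normalize, cosSim_eq_inner_normalize, ← inner_sub_left]
  calc |⟪normalize x - normalize y, normalize c⟫_ℝ|
      ≤ ‖normalize x - normalize y‖ * ‖normalize c‖ := abs_real_inner_le_norm _ _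
    _ ≤ ‖normalize x - normalize y‖ :=
      mul_le_of_le_one_right (norm_nonneg _) (norm_normalize_le c)

lemma espressoG_eq_sigmoid (τ : ℝ) (cu ca x : E) :
    espressoG τ cu ca x = sigmoid (τ * (cosSim x cu - cosSim x ca)) := by
  rw [espressoG, exp_div_exp_add_exp, mul_sub]

end Espresso

theorem espresso_lipschitz_bound_general
    {E : Type*} [NormedAddCommGroup E] [InnerProductSpace ℝ E]
    (τ : ℝ) (hτ : 0 < τ) (cu ca : E)
    (x : E) (δ : E) (hδ : ‖δ‖ < ‖x‖) :
    |espressoG τ cu ca (x + δ) - espressoG τ cu ca x| ≤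
      (τ / 2) * ‖δ‖ / (‖x‖ - ‖δ‖) := by
  set ε := ‖δ‖ / (‖x‖ - ‖δ‖)
  have hnormalize := norm_normalize_add_sub_normalize_le hδ
  have hcu := (abs_cosSim_sub_cosSim_le (x + δ) x cu).trans hnormalize
  have hca := (abs_cosSim_sub_cosSim_le (x + δ) x ca).trans hnormalize
  have hlogit : |τ * (cosSim (x + δ) cu - cosSim (x + δ) ca) - τ * (cosSim x cu - cosSim x ca)|
      ≤ τ * (2 * ε) := by
    rw [← mul_sub, abs_mul, abs_of_pos hτ]
    gcongr
    calc _ = |(cosSim (x + δ) cu - cosSim x cu) - (cosSim (x + δ) ca - cosSim x ca)| := by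
          congr 1; ring
      _ ≤ ε + ε := (abs_sub _ _).trans (add_le_add hcu hca)
      _ = 2 * ε := by ring
  calc |espressoG τ cu ca (x + δ) - espressoG τ cu ca x|
      ≤ 4⁻¹ * |τ * (cosSim (x + δ) cu - cosSim (x + δ) ca) -
          τ * (cosSim x cu - cosSim x ca)| := by
        rw [espressoG_eq_sigmoid, espressoG_eq_sigmoid]
        simpa [Real.dist_eq] using lipschitzWith_sigmoid.dist_le_mul _ _
    _ ≤ 4⁻¹ * (τ * (2 * ε)) := by gcongr
    _ = (τ / 2) * ‖δ‖ / (‖x‖ - ‖δ‖) := by ring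

theorem espresso_lipschitz_bound
    {E : Type*} [NormedAddCommGroup E] [InnerProductSpace ℝ E] [CompleteSpace E]
    (τ : ℝ) (hτ : 0 < τ) (cu ca : E) (hcu : cu ≠ 0) (hca : ca ≠ 0)
    (x : E) (hx : x ≠ 0) (δ : E) (hδ : ‖δ‖ < ‖x‖) :
    |espressoG τ cu ca (x + δ) - espressoG τ cu ca x| ≤
      (τ / 2) * ‖δ‖ / (‖x‖ - ‖δ‖) :=
  espresso_lipschitz_bound_general τ hτ cu ca x δ hδ
end
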